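/- Let m and n be distinct positive integers and z ∈ (0,1). Then ∫_0^1 ∫_0^1 I_{[a,a+z]}(m x) · I_{[a,a+z]}(n x) dx da = 0, where I_{[a,a+z]} is the centered 1-periodic indicator of [a, a+z]. -/

import Mathlib

open MeasureTheory Set

/-- The centered 1-periodic indicator function of the interval `[a, a+z]` (of length `z < 1`),
`I_{[a,a+z]}(x) = ∑_{m ∈ ℤ} 1_{[a,a+z]}(x+m) - z`. -/
noncomputable def centeredInd (a z x : ℝ) : ℝ :=
  (if Int.fract (x - a) ≤ z then 1 else 0) - z

/-!
Write `f = centeredInd 0 z`, so that `centeredInd a z y = f (y - a)` with `f` 1-periodic of mean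
zero. For fixed `x`, periodicity in `a` allows the substitution `a ↦ a + n x`, which turns the
integrand into `f ((m - n) x - a) * f (-a)`. After exchanging the integrals, the inner integral
`∫₀¹ f (k x - a) dx` with `k = m - n ≠ 0` wraps `|k|` times around the circle, so it is the mean
of `f`, which is zero.
-/

open Function intervalIntegral

namespace Function.Periodic

variable {E : Type*} [NormedAddCommGroup E] [NormedSpace ℝ E] {f : ℝ → E} {T : ℝ}

theorem intervalIntegral_comp_add_right (hf : Periodic f T) (t : ℝ) :
    ∫ x in 0..T, f (x + t) = ∫ x in 0..T, f x := by
  rw [integral_comp_add_right, zero_add, add_comm, hf.intervalIntegral_add_eq t 0, zero_add]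

theorem intervalIntegral_comp_intCast_mul_add (hf : Periodic f T)
    (h_int : ∀ t₁ t₂, IntervalIntegrable f volume t₁ t₂) {k : ℤ} (hk : k ≠ 0) (c : ℝ) :
    ∫ x in 0..T, f (k * x + c) = ∫ x in 0..T, f x := by
  have hk' : (k : ℝ) ≠ 0 := Int.cast_ne_zero.mpr hk
  rw [integral_comp_mul_add _ hk', mul_zero, zero_add, add_comm, ← zsmul_eq_mul,
    hf.intervalIntegral_add_zsmul_eq k c h_int, hf.intervalIntegral_add_eq c 0, zero_add,
    ← Int.cast_smul_eq_zsmul ℝ, inv_smul_smul₀ hk']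

end Function.Periodic

theorem integrableOn_uIoc_prod_uIoc_of_bounded {E : Type*} [NormedAddCommGroup E]
    {F : ℝ × ℝ → E} (hF : StronglyMeasurable F) {C : ℝ} (hFC : ∀ p, ‖F p‖ ≤ C)
    (a b c d : ℝ) : IntegrableOn F (uIoc a b ×ˢ uIoc c d) := by
  refine IntegrableOn.of_bound ?_ hF.aestronglyMeasurable C (ae_of_all _ hFC)
  exact ((Metric.isBounded_Icc _ _).subset uIoc_subset_uIcc).prod
    ((Metric.isBounded_Icc _ _).subset uIoc_subset_uIcc) |>.measure_lt_top

theorem Function.Periodic.intervalIntegral_intervalIntegral_comp_mul_sub_mul_eq_zero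
    {f g : ℝ → ℝ} {T C D : ℝ} (hf : Periodic f T) (hg : Periodic g T)
    (hf_meas : Measurable f) (hg_meas : Measurable g)
    (hfC : ∀ x, |f x| ≤ C) (hgD : ∀ x, |g x| ≤ D) (hf_mean : ∫ x in 0..T, f x = 0)
    {m n : ℤ} (hmn : m ≠ n) :
    ∫ a in 0..T, ∫ x in 0..T, f (m * x - a) * g (n * x - a) = 0 := by
  have h_swap : ∀ {F : ℝ → ℝ → ℝ}, Measurable (uncurry F) → (∀ a x, |F a x| ≤ C * D) →
      ∫ a in 0..T, ∫ x in 0..T, F a x = ∫ x in 0..T, ∫ a in 0..T, F a x := fun hF hFCD =>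
    intervalIntegral_intervalIntegral_swap <| integrableOn_uIoc_prod_uIoc_of_bounded
      hF.stronglyMeasurable (fun p => hFCD p.1 p.2) _ _ _ _
  have h_bound : ∀ u v, |f u * g v| ≤ C * D := fun u v => by
    rw [abs_mul]
    exact mul_le_mul (hfC u) (hgD v) (abs_nonneg _) ((abs_nonneg _).trans (hfC 0))
  have h_shift : ∀ x, ∫ a in 0..T, f (m * x - a) * g (n * x - a)
      = ∫ a in 0..T, f ((m - n : ℤ) * x - a) * g (-a) := fun x => by
    have h := ((hf.const_sub (m * x)).mul (hg.const_sub (n * x))).intervalIntegral_comp_add_right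
      (n * x)
    simp only [Pi.mul_apply] at h
    rw [← h]
    congr 1 with a
    push_cast
    congr 2 <;> ring
  have hf_int : ∀ t₁ t₂, IntervalIntegrable f volume t₁ t₂ := fun _ _ =>
    intervalIntegrable_const.mono_fun' hf_meas.aestronglyMeasurable (ae_of_all _ hfC)
  have h_inner : ∀ a, ∫ x in 0..T, f ((m - n : ℤ) * x - a) = 0 := fun a => by
    simp_rw [sub_eq_add_neg _ a]
    rw [hf.intervalIntegral_comp_intCast_mul_add hf_int (sub_ne_zero.mpr hmn), hf_mean]
  calc ∫ a in 0..T, ∫ x in 0..T, f (m * x - a) * g (n * x - a)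
      = ∫ x in 0..T, ∫ a in 0..T, f ((m - n : ℤ) * x - a) * g (-a) := by
        rw [h_swap (by fun_prop) fun _ _ => h_bound _ _]
        simp_rw [h_shift]
    _ = ∫ a in 0..T, (∫ x in 0..T, f ((m - n : ℤ) * x - a)) * g (-a) := by
        rw [← h_swap (by fun_prop) fun _ _ => h_bound _ _]
        simp_rw [intervalIntegral.integral_mul_const]
    _ = 0 := by simp_rw [h_inner, zero_mul, intervalIntegral.integral_zero]

theorem measurable_centeredInd (a z : ℝ) : Measurable (centeredInd a z) :=
  (Measurable.ite (measurableSet_le (measurable_fract.comp (measurable_id.sub_const a))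
    measurable_const) measurable_const measurable_const).sub_const z

theorem abs_centeredInd_le (a z x : ℝ) : |centeredInd a z x| ≤ 1 + |z| := by
  refine (abs_sub _ _).trans (add_le_add_left ?_ _)
  split_ifs <;> simp

theorem periodic_centeredInd (a z : ℝ) : Periodic (centeredInd a z) 1 := fun x => by
  simp only [centeredInd, add_sub_right_comm, Int.fract_add_one]

theorem intervalIntegral_centeredInd_zero {z : ℝ} (hz : z ∈ Ico (0 : ℝ) 1) :
    ∫ x in 0..1, centeredInd 0 z x = 0 := by
  obtain ⟨hz0, hz1⟩ := hz
  have h_int : ∀ t₁ t₂, IntervalIntegrable (centeredInd 0 z) volume t₁ t₂ := fun _ _ =>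
    intervalIntegrable_const.mono_fun' (measurable_centeredInd 0 z).aestronglyMeasurable
      (ae_of_all _ (abs_centeredInd_le 0 z))
  have h_below : ∫ x in 0..z, centeredInd 0 z x = z * (1 - z) := by
    rw [integral_congr (g := fun _ => 1 - z), intervalIntegral.integral_const, smul_eq_mul,
      sub_zero]
    intro x hx
    rw [uIcc_of_le hz0] at hx
    simp [centeredInd, Int.fract_eq_self.mpr ⟨hx.1, hx.2.trans_lt hz1⟩, hx.2]
  have h_above : ∫ x in z..1, centeredInd 0 z x = (1 - z) * -z := by
    rw [integral_of_le hz1.le, integral_Ioc_eq_integral_Ioo,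
      setIntegral_congr_fun measurableSet_Ioo (g := fun _ => -z), setIntegral_const,
      Real.volume_real_Ioo_of_le hz1.le, smul_eq_mul]
    intro x hx
    simp [centeredInd, Int.fract_eq_self.mpr ⟨hz0.trans hx.1.le, hx.2⟩, hx.1]
  rw [← integral_add_adjacent_intervals (h_int 0 z) (h_int z 1), h_below, h_above]
  ring

theorem average_orthogonality_general (m n : ℕ) (hmn : m ≠ n)
    (z : ℝ) (hz : z ∈ Ioo (0:ℝ) 1) :
    ∫ a in (0:ℝ)..1, ∫ x in (0:ℝ)..1,
      centeredInd a z (m * x) * centeredInd a z (n * x) = 0 := by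
  have h := (periodic_centeredInd 0 z).intervalIntegral_intervalIntegral_comp_mul_sub_mul_eq_zero
    (periodic_centeredInd 0 z) (measurable_centeredInd 0 z) (measurable_centeredInd 0 z)
    (abs_centeredInd_le 0 z) (abs_centeredInd_le 0 z)
    (intervalIntegral_centeredInd_zero (Ioo_subset_Ico_self hz)) (Nat.cast_injective.ne hmn)
  simpa only [centeredInd, sub_zero, Int.cast_natCast] using h

theorem average_orthogonality (m n : ℕ) (hm : 0 < m) (hn : 0 < n) (hmn : m ≠ n)
    (z : ℝ) (hz : z ∈ Ioo (0:ℝ) 1) :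
    ∫ a in (0:ℝ)..1, ∫ x in (0:ℝ)..1,
      centeredInd a z (m * x) * centeredInd a z (n * x) = 0 :=
  average_orthogonality_general m n hmn z hz
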